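/- arXiv:1705.07877 — 3 statements merged into one kernel-verified Lean document; each statement's English description precedes it below -/
import Mathlib

section
/- Let f : ℝⁿ → ℝ be expressible as f(x) = α₀ ⊗₁ α₁f₁(x_{I₁}) ⊗₂ α₂f₂(x_{I₂}) ⊗₃ ⋯ ⊗ₘ αₘfₘ(x_{Iₘ}), where the index sets I₁,…,Iₘ partition {1,…,n}, each ⊗ᵢ is either addition or multiplication, and the αᵢ are real constants. Then there exist an integer p ≥ 1, integers q₁,…,q_p ≥ 1 with q₁+⋯+q_p = m, constants β₀, β₁,…,β_p, and scalar functions ψ_{i,j} (each depending on a sub-block of the variables, so that these blocks refine the partition I₁,…,Iₘ) such that f(x) = β₀ + Σ_{i=1}^{p} βᵢ ∏_{j=1}^{qᵢ} ψ_{i,j}(x). -/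
/-! Since `×` binds tighter than `+`, the chain splits at each `+` into maximal runs of
products. The leading run is multiplied into `α₀`, and every later run is a monomial with
coefficient `1`. If the leading run is empty, `α₀` is the constant term; otherwise it is the
coefficient of the first monomial and the constant term is `0`. The runs use every factor
`αₖ fₖ` exactly once, so their lengths add up to `m`, and each factor depends only on `I k`. -/

/-- `f` depends only on the variables indexed by `S`. -/
def DependsOnIdx {n : ℕ} (f : (Fin n → ℝ) → ℝ) (S : Finset (Fin n)) : Prop :=
  ∀ x y : Fin n → ℝ, (∀ i ∈ S, x i = y i) → f x = f y

/-- Evaluate a chain `a ⊗₁ t₁ ⊗₂ t₂ ⋯` where `true` stands for `×` and `false`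
for `+`, with the usual precedence of `×` over `+`. -/
def chainEval : ℝ → List (Bool × ℝ) → ℝ
  | a, [] => a
  | a, (true, t) :: rest => chainEval (a * t) rest
  | a, (false, t) :: rest => a + chainEval t rest

section

variable {σ : Type*}

def leadingRun : List (Bool × σ) → List σ
  | (true, t) :: rest => t :: leadingRun rest
  | _ => []

def laterRuns : List (Bool × σ) → List (List σ)
  | [] => []
  | (true, _) :: rest => laterRuns rest
  | (false, t) :: rest => (t :: leadingRun rest) :: laterRuns rest

theorem leadingRun_append_flatten_laterRuns (l : List (Bool × σ)) :
    leadingRun l ++ (laterRuns l).flatten = l.map Prod.snd := by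
  induction l with
  | nil => rfl
  | cons bt rest ih =>
    obtain ⟨_ | _, t⟩ := bt <;> simp [leadingRun, laterRuns, ih]

theorem ne_nil_of_mem_laterRuns {l : List (Bool × σ)} {r : List σ} (hr : r ∈ laterRuns l) :
    r ≠ [] := by
  induction l with
  | nil => simp [laterRuns] at hr
  | cons bt rest ih =>
    obtain ⟨_ | _, t⟩ := bt
    · rcases List.mem_cons.mp hr with rfl | hr
      · exact List.cons_ne_nil _ _
      · exact ih hr
    · exact ih hr

theorem chainEval_map_eq_mul_prod_leadingRun_add_sum (g : σ → ℝ) (l : List (Bool × σ)) (a : ℝ) :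
    chainEval a (l.map (Prod.map id g)) =
      a * ((leadingRun l).map g).prod + ((laterRuns l).map fun r => (r.map g).prod).sum := by
  induction l generalizing a with
  | nil => simp [chainEval, leadingRun, laterRuns]
  | cons bt rest ih =>
    obtain ⟨_ | _, t⟩ := bt
    · simp [chainEval, leadingRun, laterRuns, ih (g t)]
    · simp [chainEval, leadingRun, laterRuns, ih (a * g t), mul_assoc]

theorem exists_chainEval_map_eq_add_sum_monomials (a : ℝ) (l : List (Bool × σ)) :
    ∃ (β₀ : ℝ) (M : List (ℝ × List σ)), (∀ c ∈ M, c.2 ≠ []) ∧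
      (M.map Prod.snd).flatten = l.map Prod.snd ∧
      ∀ g : σ → ℝ, chainEval a (l.map (Prod.map id g)) =
        β₀ + (M.map fun c => c.1 * (c.2.map g).prod).sum := by
  have hlater : ∀ c ∈ (laterRuns l).map ((1 : ℝ), ·), c.2 ≠ [] := by
    simp only [List.mem_map]
    rintro _ ⟨r, hr, rfl⟩
    exact ne_nil_of_mem_laterRuns hr
  rcases hlead : leadingRun l with _ | ⟨t, ts⟩
  · refine ⟨a, (laterRuns l).map ((1 : ℝ), ·), hlater, ?_, fun g => ?_⟩
    · simpa [hlead, Function.comp_def] using leadingRun_append_flatten_laterRuns l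
    · simp [chainEval_map_eq_mul_prod_leadingRun_add_sum, hlead, Function.comp_def]
  · refine ⟨0, (a, t :: ts) :: (laterRuns l).map ((1 : ℝ), ·), ?_, ?_, fun g => ?_⟩
    · simpa using hlater
    · simpa [hlead, Function.comp_def] using leadingRun_append_flatten_laterRuns l
    · simp [chainEval_map_eq_mul_prod_leadingRun_add_sum, hlead, Function.comp_def]

end

theorem partially_separable_normal_form_general {n : ℕ} (f : (Fin n → ℝ) → ℝ)
    (m : ℕ) (hm : 1 ≤ m)
    (I : Fin m → Finset (Fin n))
    (α₀ : ℝ) (α : Fin m → ℝ) (ops : Fin m → Bool)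
    (fs : Fin m → (Fin n → ℝ) → ℝ)
    (hdep : ∀ i, DependsOnIdx (fs i) (I i))
    (hf : ∀ x, f x = chainEval α₀ (List.ofFn fun i => (ops i, α i * fs i x))) :
    ∃ (p : ℕ), 1 ≤ p ∧ ∃ (q : Fin p → ℕ),
      (∀ i, 1 ≤ q i) ∧ (∑ i, q i) = m ∧
      ∃ (β₀ : ℝ) (β : Fin p → ℝ)
        (J : (i : Fin p) → Fin (q i) → Finset (Fin n))
        (ψ : (i : Fin p) → Fin (q i) → (Fin n → ℝ) → ℝ),
        (∀ i j, ∃ k, J i j = I k) ∧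
        (∀ i j, DependsOnIdx (ψ i j) (J i j)) ∧
        ∀ x, f x = β₀ + ∑ i, β i * ∏ j, ψ i j x := by
  obtain ⟨β₀, M, hM, hflat, hsum⟩ :=
    exists_chainEval_map_eq_add_sum_monomials α₀ (List.ofFn fun i => (ops i, i))
  have hlen : ∑ i : Fin M.length, M[i.1].2.length = m := by
    rw [Fin.sum_univ_fun_getElem M fun c => c.2.length]
    simpa [List.length_flatten, Function.comp_def] using congrArg List.length hflat
  refine ⟨M.length, ?_, fun i => M[i].2.length, fun i => ?_, hlen, β₀, fun i => M[i].1,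
    fun i j => I M[i].2[j], fun i j x => α M[i].2[j] * fs M[i].2[j] x,
    fun i j => ⟨_, rfl⟩, fun i j x y hxy => congrArg _ (hdep _ x y hxy), fun x => ?_⟩
  · refine List.length_pos_iff.mpr fun hM0 => ?_
    simp [hM0] at hflat
    omega
  · exact List.length_pos_iff.mpr (hM _ (List.getElem_mem _))
  · have hx := hsum fun k => α k * fs k x
    simp only [List.map_ofFn, Function.comp_def, Prod.map_apply, id] at hx
    rw [hf x, hx, ← Fin.sum_univ_fun_getElem]
    simp only [Fin.getElem_fin, Fin.prod_univ_fun_getElem _ fun k => α k * fs k x]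

theorem partially_separable_normal_form {n : ℕ} (f : (Fin n → ℝ) → ℝ)
    (m : ℕ) (hm : 1 ≤ m)
    (I : Fin m → Finset (Fin n))
    (hdisj : ∀ i j : Fin m, i ≠ j → Disjoint (I i) (I j))
    (hcover : ∀ k : Fin n, ∃ i, k ∈ I i)
    (α₀ : ℝ) (α : Fin m → ℝ) (ops : Fin m → Bool)
    (fs : Fin m → (Fin n → ℝ) → ℝ)
    (hdep : ∀ i, DependsOnIdx (fs i) (I i))
    (hf : ∀ x, f x = chainEval α₀ (List.ofFn fun i => (ops i, α i * fs i x))) :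
    ∃ (p : ℕ), 1 ≤ p ∧ ∃ (q : Fin p → ℕ),
      (∀ i, 1 ≤ q i) ∧ (∑ i, q i) = m ∧
      ∃ (β₀ : ℝ) (β : Fin p → ℝ)
        (J : (i : Fin p) → Fin (q i) → Finset (Fin n))
        (ψ : (i : Fin p) → Fin (q i) → (Fin n → ℝ) → ℝ),
        (∀ i j, ∃ k, J i j = I k) ∧
        (∀ i j, DependsOnIdx (ψ i j) (J i j)) ∧
        ∀ x, f x = β₀ + ∑ i, β i * ∏ j, ψ i j x :=
  partially_separable_normal_form_general f m hm I α₀ α ops fs hdep hf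
end

section
/- Conversely, if f : ℝⁿ → ℝ can be written as f(x) = β₀ + Σ_{i=1}^{p} βᵢ ∏_{j=1}^{qᵢ} ψ_{i,j}(x_{I_{i,j}}), where the index sets I_{i,j} partition {1,…,n}, then f is partially separable: there exist constants α₀,…,αₘ (with m = Σᵢ qᵢ), binary operators ⊗₁,…,⊗ₘ ∈ {+, ×}, and a labeling of the ψ_{i,j} as f₁,…,fₘ such that f(x) = α₀ ⊗₁ α₁f₁ ⊗₂ ⋯ ⊗ₘ αₘfₘ (with × binding tighter than +). -/
/-!
Each product `βᵢ ψᵢ₀ ⋯ ψᵢ,qᵢ₋₁` becomes the segment `+ βᵢ ψᵢ₀ × ψᵢ₁ × ⋯ × ψᵢ,qᵢ₋₁` of the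
chain. Every segment opens with `+`, so the chain of all segments evaluates to its head plus the
sum of the segment products. A term with `qᵢ = 0` has no segment; its value `βᵢ` (an empty
product) is absorbed into `α₀`.
-/

/-- `f` depends only on the variables indexed by `S`. -/
def DependsOnFinset {n : ℕ} (f : (Fin n → ℝ) → ℝ) (S : Finset (Fin n)) : Prop :=
  ∀ x y : Fin n → ℝ, (∀ i ∈ S, x i = y i) → f x = f y

def productSegment {N : ℕ} (c : ℝ) (t : Fin N → ℝ) : List (Bool × ℝ) :=
  (List.finRange N).map fun j => (decide (j.val ≠ 0), (if j.val = 0 then c else 1) * t j)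

lemma productSegment_succ {N : ℕ} (c : ℝ) (t : Fin (N + 1) → ℝ) :
    productSegment c t = (false, c * t 0) :: (List.ofFn (Fin.tail t)).map (true, ·) := by
  simp [productSegment, List.finRange_succ, List.ofFn_eq_map, Fin.tail]

lemma chainEval_map_true_append (a : ℝ) (ts : List ℝ) (rest : List (Bool × ℝ)) :
    chainEval a (ts.map (true, ·) ++ rest) = chainEval (a * ts.prod) rest := by
  induction ts generalizing a with
  | nil => simp
  | cons t ts ih => simp [chainEval, ih, mul_assoc]

lemma chainEval_productSegment_append {N : ℕ} (a c : ℝ) (t : Fin N → ℝ)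
    {rest : List (Bool × ℝ)} {S : ℝ} (hrest : ∀ b, chainEval b rest = b + S) :
    chainEval a (productSegment c t ++ rest) = a + ((if N = 0 then 0 else c * ∏ j, t j) + S) := by
  cases N with
  | zero => simp [productSegment, hrest]
  | succ N =>
    rw [productSegment_succ, List.cons_append, chainEval, chainEval_map_true_append, hrest,
      Fin.prod_univ_succ, List.prod_ofFn]
    simp [Fin.tail, mul_assoc]

lemma chainEval_flatMap_productSegment {ι : Type*} {N : ι → ℕ} (c : ι → ℝ)
    (t : (i : ι) → Fin (N i) → ℝ) (l : List ι) (a : ℝ) :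
    chainEval a (l.flatMap fun i => productSegment (c i) (t i))
      = a + (l.map fun i => if N i = 0 then 0 else c i * ∏ j, t i j).sum := by
  induction l generalizing a with
  | nil => simp [chainEval]
  | cons i l ih =>
    rw [List.flatMap_cons, chainEval_productSegment_append a (c i) (t i) ih]
    simp

lemma ite_add_ite_mul_prod {N : ℕ} (c : ℝ) (t : Fin N → ℝ) :
    ((if N = 0 then c else 0) + if N = 0 then 0 else c * ∏ j, t j) = c * ∏ j, t j := by
  cases N <;> simp

theorem normal_form_partially_separable_general {n : ℕ} (f : (Fin n → ℝ) → ℝ)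
    (p : ℕ) (q : Fin p → ℕ)
    (β₀ : ℝ) (β : Fin p → ℝ)
    (ψ : (i : Fin p) → Fin (q i) → (Fin n → ℝ) → ℝ)
    (hf : ∀ x, f x = β₀ + ∑ i, β i * ∏ j, ψ i j x) :
    ∃ (m : ℕ), m = ∑ i, q i ∧
      ∃ (α₀ : ℝ) (α : Fin m → ℝ) (ops : Fin m → Bool)
        (e : Fin m → Σ i : Fin p, Fin (q i)),
        Function.Bijective e ∧
        ∀ x, f x = chainEval α₀
          (List.ofFn fun k => (ops k, α k * ψ (e k).1 (e k).2 x)) := by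
  set L := (List.finRange p).sigma fun i => List.finRange (q i)
  let e : Fin L.length ≃ Σ i : Fin p, Fin (q i) :=
    List.Nodup.getEquivOfForallMemList L
      ((List.nodup_finRange p).sigma fun i => List.nodup_finRange (q i))
      fun ⟨i, j⟩ => List.mem_sigma.2 ⟨List.mem_finRange i, List.mem_finRange j⟩
  let op (s : Σ i : Fin p, Fin (q i)) : Bool := decide (s.2.val ≠ 0)
  let coef (s : Σ i : Fin p, Fin (q i)) : ℝ := if s.2.val = 0 then β s.1 else 1
  refine ⟨L.length, by simp [L, List.length_sigma, Fin.sum_univ_def],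
    β₀ + ∑ i, if q i = 0 then β i else 0, fun k => coef (e k), fun k => op (e k), e,
    e.bijective, fun x => ?_⟩
  have hchain : (List.ofFn fun k => (op (e k), coef (e k) * ψ (e k).1 (e k).2 x))
      = (List.finRange p).flatMap fun i => productSegment (β i) fun j => ψ i j x :=
    (List.ofFn_getElem_eq_map L fun s => (op s, coef s * ψ s.1 s.2 x)).trans <| by
      simp [L, List.sigma, List.map_flatMap, Function.comp_def, op, coef, productSegment]
  rw [hf, hchain, chainEval_flatMap_productSegment, ← Fin.sum_univ_def, add_assoc,
    ← Finset.sum_add_distrib]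
  simp only [ite_add_ite_mul_prod]

theorem normal_form_partially_separable {n : ℕ} (f : (Fin n → ℝ) → ℝ)
    (p : ℕ) (q : Fin p → ℕ)
    (J : (i : Fin p) → Fin (q i) → Finset (Fin n))
    (hdisj : ∀ a b : Σ i : Fin p, Fin (q i), a ≠ b → Disjoint (J a.1 a.2) (J b.1 b.2))
    (hcover : ∀ k : Fin n, ∃ i j, k ∈ J i j)
    (β₀ : ℝ) (β : Fin p → ℝ)
    (ψ : (i : Fin p) → Fin (q i) → (Fin n → ℝ) → ℝ)
    (hdep : ∀ i j, DependsOnFinset (ψ i j) (J i j))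
    (hf : ∀ x, f x = β₀ + ∑ i, β i * ∏ j, ψ i j x) :
    ∃ (m : ℕ), m = ∑ i, q i ∧
      ∃ (α₀ : ℝ) (α : Fin m → ℝ) (ops : Fin m → Bool)
        (e : Fin m → Σ i : Fin p, Fin (q i)),
        Function.Bijective e ∧
        ∀ x, f x = chainEval α₀
          (List.ofFn fun k => (ops k, α k * ψ (e k).1 (e k).2 x)) :=
  normal_form_partially_separable_general f p q β₀ β ψ hf
end

section
/- If f : ℝⁿ → ℝ is completely separable, i.e. it admits a chain representation f = α₀ ⊗₁ α₁f₁(x₁) ⊗₂ ⋯ ⊗ₙ αₙfₙ(xₙ) with each fᵢ a function of the single variable xᵢ and each ⊗ᵢ ∈ {+,×}, then f admits a block-factor normal form f(x) = β₀ + Σ_{i=1}^{p} βᵢ ∏_{j∈Bᵢ} ψⱼ(xⱼ) where B₁,…,B_p partition {1,…,n} and each ψⱼ is a univariate function. -/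
/-- `f` depends only on the variables indexed by `S`. -/
def DependsOnCoords {n : ℕ} (f : (Fin n → ℝ) → ℝ) (S : Finset (Fin n)) : Prop :=
  ∀ x y : Fin n → ℝ, (∀ i ∈ S, x i = y i) → f x = f y

/-!
Reading the chain from the left, every `+` closes the current product and opens a new one,
so the terms fall into consecutive multiplicative blocks.  We record the blocks as the fibres
of a labelling `blk : Fin n → Fin (p + 1)`: label `0` is the run of factors multiplying the
leading constant, and the labels `1, …, p` are the blocks opened by the `p` additions.
Fibres of a map are automatically pairwise disjoint and cover the index set.
-/

open Finset

theorem Fin.prod_filter_cons_eq {M ι : Type*} [CommMonoid M] [DecidableEq ι] {n : ℕ}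
    (b : ι) (blk : Fin n → ι) (t : Fin (n + 1) → M) (i : ι) :
    ∏ j with (Fin.cons b blk : Fin (n + 1) → ι) j = i, t j =
      (if b = i then t 0 else 1) * ∏ j with blk j = i, t j.succ := by
  simp only [prod_filter, Fin.prod_univ_succ, Fin.cons_zero, Fin.cons_succ]

theorem exists_chainEval_ofFn_eq_sum_prod_fibers {n : ℕ} (ops : Fin n → Bool) :
    ∃ (p : ℕ) (blk : Fin n → Fin (p + 1)), ∀ (a : ℝ) (t : Fin n → ℝ),
      chainEval a (List.ofFn fun i => (ops i, t i)) =
        a * ∏ j with blk j = 0, t j + ∑ i : Fin p, ∏ j with blk j = i.succ, t j := by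
  induction n with
  | zero => exact ⟨0, Fin.elim0, fun a t => by simp [chainEval]⟩
  | succ n ih =>
    obtain ⟨p, blk, hblk⟩ := ih fun i => ops i.succ
    cases hop : ops 0 with
    | true =>
      refine ⟨p, Fin.cons 0 blk, fun a t => ?_⟩
      simp only [List.ofFn_succ, hop, chainEval, Fin.prod_filter_cons_eq,
        (Fin.succ_ne_zero _).symm]
      rw [hblk (a * t 0) fun i => t i.succ]
      simp [mul_assoc]
    | false =>
      -- the new term opens block `1`, absorbing the old head run; old blocks shift up by one
      refine ⟨p + 1, Fin.cons (Fin.succ 0) (Fin.succ ∘ blk), fun a t => ?_⟩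
      simp only [List.ofFn_succ, hop, chainEval, Fin.prod_filter_cons_eq]
      rw [hblk (t 0) fun i => t i.succ, Fin.sum_univ_succ]
      simp only [Function.comp_apply, Fin.succ_inj, (Fin.succ_ne_zero _).symm]
      simp

theorem completely_separable_normal_form {n : ℕ} (f : (Fin n → ℝ) → ℝ)
    (α₀ : ℝ) (α : Fin n → ℝ) (ops : Fin n → Bool)
    (fs : Fin n → ℝ → ℝ)
    (hf : ∀ x, f x = chainEval α₀ (List.ofFn fun i => (ops i, α i * fs i (x i)))) :
    ∃ (p : ℕ), 1 ≤ p ∧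
      ∃ (B : Fin p → Finset (Fin n)),
        (∀ i j : Fin p, i ≠ j → Disjoint (B i) (B j)) ∧
        (∀ k : Fin n, ∃ i, k ∈ B i) ∧
        ∃ (β₀ : ℝ) (β : Fin p → ℝ) (ψ : Fin n → ℝ → ℝ),
          ∀ x, f x = β₀ + ∑ i, β i * ∏ j ∈ B i, ψ j (x j) := by
  obtain ⟨p, blk, hblk⟩ := exists_chainEval_ofFn_eq_sum_prod_fibers ops
  refine ⟨p + 1, Nat.le_add_left 1 p, fun i => {j | blk j = i}, ?_, fun k => ⟨blk k, by simp⟩,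
    0, Fin.cons α₀ 1, fun j y => α j * fs j y, fun x => ?_⟩
  · intro i j hij
    exact disjoint_filter.2 fun k _ hki hkj => hij (hki.symm.trans hkj)
  · rw [hf x, hblk, Fin.sum_univ_succ]
    simp
end
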